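/- arXiv:2409.18487 — 5 statements merged into one kernel-verified Lean document; each statement's English description precedes it below -/
import Mathlib

section
/- If u and v are two real-valued solutions of y'' + ω²q(t)y = 0 whose Wronskian u v' − v u' is identically 1, then the function α' defined by α'(t) = 1/(u(t)² + v(t)²) satisfies Kummer's equation (α')² − ω²q − (3/4)(α''/α')² + (1/2)α'''/α' = 0, provided u² + v² > 0 on the interval. -/
/-!
Write `R = u² + v²`, so that `α' = 1/R`. Then `α''/α' = -R'/R` and `α'''/α' = (2R'² - RR'')/R²`,
and Kummer's expression becomes `(4 + R'² - 2RR'' - 4ω²qR²) / (4R²)`. The equation gives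
`R'' = 2(u'² + v'²) - 2ω²qR`, which turns the numerator into `4(1 - W²)` by Lagrange's identity
`(uu' + vv')² + (uv' - vu')² = (u² + v²)(u'² + v'²)`; it vanishes because `W = uv' - vu' = 1`.
-/

open Filter Topology

section
variable {I : Set ℝ} {f u v : ℝ → ℝ} {t : ℝ}

lemma ContDiffOn.differentiableAt_deriv (hf : ContDiffOn ℝ 2 f I) (hI : IsOpen I) (ht : t ∈ I) :
    DifferentiableAt ℝ (deriv f) t :=
  ((hf.deriv_of_isOpen hI (m := 1) (by norm_num)).differentiableOn one_ne_zero).differentiableAt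
    (hI.mem_nhds ht)

lemma deriv_deriv_one_div (hI : IsOpen I) (hf : ContDiffOn ℝ 2 f I) (hf0 : ∀ s ∈ I, f s ≠ 0)
    (ht : t ∈ I) :
    deriv (deriv fun s => 1 / f s) t = (2 * deriv f t ^ 2 - f t * deriv (deriv f) t) / f t ^ 3 := by
  have hdf : ∀ s ∈ I, DifferentiableAt ℝ f s := fun s hs =>
    (hf.contDiffAt (hI.mem_nhds hs)).differentiableAt two_ne_zero
  have hderiv : deriv (fun s => 1 / f s) =ᶠ[𝓝 t] fun s => -deriv f s / f s ^ 2 := by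
    filter_upwards [hI.mem_nhds ht] with s hs
    rw [deriv_const_div 1 (hdf s hs) (hf0 s hs)]
    ring
  have hquot : HasDerivAt (fun s => -deriv f s / f s ^ 2) _ t :=
    (hf.differentiableAt_deriv hI ht).hasDerivAt.neg.div ((hdf t ht).hasDerivAt.pow 2)
      (pow_ne_zero 2 (hf0 t ht))
  rw [hderiv.deriv_eq, hquot.deriv]
  simp only [Pi.neg_apply]
  field_simp [hf0 t ht]
  ring

lemma deriv_sq_add_sq (hu : DifferentiableAt ℝ u t) (hv : DifferentiableAt ℝ v t) :
    deriv (fun s => u s ^ 2 + v s ^ 2) t = 2 * (u t * deriv u t + v t * deriv v t) := by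
  have h : HasDerivAt (fun s => u s ^ 2 + v s ^ 2) _ t :=
    (hu.hasDerivAt.pow 2).add (hv.hasDerivAt.pow 2)
  rw [h.deriv]
  ring

lemma deriv_deriv_sq_add_sq (hI : IsOpen I) (hu : ContDiffOn ℝ 2 u I) (hv : ContDiffOn ℝ 2 v I)
    (ht : t ∈ I) :
    deriv (deriv fun s => u s ^ 2 + v s ^ 2) t =
      2 * (deriv u t ^ 2 + u t * deriv (deriv u) t + deriv v t ^ 2 + v t * deriv (deriv v) t) := by
  have hdu : ∀ s ∈ I, DifferentiableAt ℝ u s := fun s hs =>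
    (hu.contDiffAt (hI.mem_nhds hs)).differentiableAt two_ne_zero
  have hdv : ∀ s ∈ I, DifferentiableAt ℝ v s := fun s hs =>
    (hv.contDiffAt (hI.mem_nhds hs)).differentiableAt two_ne_zero
  have hderiv : deriv (fun s => u s ^ 2 + v s ^ 2) =ᶠ[𝓝 t]
      fun s => 2 * (u s * deriv u s + v s * deriv v s) := by
    filter_upwards [hI.mem_nhds ht] with s hs using deriv_sq_add_sq (hdu s hs) (hdv s hs)
  have h : HasDerivAt (fun s => 2 * (u s * deriv u s + v s * deriv v s)) _ t :=
    (((hdu t ht).hasDerivAt.mul (hu.differentiableAt_deriv hI ht).hasDerivAt).add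
      ((hdv t ht).hasDerivAt.mul (hv.differentiableAt_deriv hI ht).hasDerivAt)).const_mul 2
  rw [hderiv.deriv_eq, h.deriv]
  ring

end

lemma kummer_one_div_sq_add_sq {a b a' b' Q R R' R'' : ℝ} (hR : R = a ^ 2 + b ^ 2) (hR0 : R ≠ 0)
    (hR' : R' = 2 * (a * a' + b * b')) (hR'' : R'' = 2 * (a' ^ 2 + b' ^ 2) - 2 * Q * R)
    (hw : a * b' - b * a' = 1) :
    (1 / R) ^ 2 - Q - 3 / 4 * ((-R' / R ^ 2) / (1 / R)) ^ 2
      + 1 / 2 * (((2 * R' ^ 2 - R * R'') / R ^ 3) / (1 / R)) = 0 := by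
  have lagrange : (a * a' + b * b') ^ 2 + (a * b' - b * a') ^ 2 = R * (a' ^ 2 + b' ^ 2) := by
    rw [hR]; ring
  rw [hw] at lagrange
  subst hR' hR''
  field_simp
  linear_combination 4 * lagrange

theorem kummer_from_solutions_general
    (I : Set ℝ) (hI : IsOpen I)
    (q : ℝ → ℝ) (ω : ℝ)
    (u v : ℝ → ℝ)
    (hu : ContDiffOn ℝ 3 u I) (hv : ContDiffOn ℝ 3 v I)
    (huode : ∀ t ∈ I, deriv (deriv u) t + ω ^ 2 * q t * u t = 0)
    (hvode : ∀ t ∈ I, deriv (deriv v) t + ω ^ 2 * q t * v t = 0)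
    (hw : ∀ t ∈ I, u t * deriv v t - v t * deriv u t = 1)
    (hpos : ∀ t ∈ I, 0 < (u t) ^ 2 + (v t) ^ 2)
    (ap : ℝ → ℝ) (hap : ap = fun t => 1 / ((u t) ^ 2 + (v t) ^ 2)) :
    ∀ t ∈ I,
      (ap t) ^ 2 - ω ^ 2 * q t
        - (3 / 4) * (deriv ap t / ap t) ^ 2
        + (1 / 2) * (deriv (deriv ap) t / ap t) = 0 := by
  intro t ht
  have hu2 : ContDiffOn ℝ 2 u I := hu.of_le (by norm_num)
  have hv2 : ContDiffOn ℝ 2 v I := hv.of_le (by norm_num)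
  set R : ℝ → ℝ := fun s => u s ^ 2 + v s ^ 2
  have hR : ContDiffOn ℝ 2 R I := (hu2.pow 2).add (hv2.pow 2)
  have hR0 : ∀ s ∈ I, R s ≠ 0 := fun s hs => (hpos s hs).ne'
  change ap = fun s => 1 / R s at hap
  subst hap
  rw [deriv_deriv_one_div hI hR hR0 ht,
    deriv_const_div 1 ((hR.contDiffAt (hI.mem_nhds ht)).differentiableAt two_ne_zero) (hR0 t ht),
    neg_one_mul]
  refine kummer_one_div_sq_add_sq (R := R t) rfl (hR0 t ht) ?_ ?_ (hw t ht)
  · exact deriv_sq_add_sq ((hu2.contDiffAt (hI.mem_nhds ht)).differentiableAt two_ne_zero)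
      ((hv2.contDiffAt (hI.mem_nhds ht)).differentiableAt two_ne_zero)
  · rw [deriv_deriv_sq_add_sq hI hu2 hv2 ht]
    linear_combination 2 * u t * huode t ht + 2 * v t * hvode t ht

/-- If `u`, `v` are real solutions of `y'' + ω² q y = 0` with Wronskian
`u v' − v u' = 1` and `u² + v² > 0`, then `α' := 1/(u² + v²)` satisfies
Kummer's equation. -/
theorem kummer_from_solutions
    (I : Set ℝ) (hI : IsOpen I)
    (q : ℝ → ℝ) (hq : ContDiffOn ℝ 1 q I) (ω : ℝ)
    (u v : ℝ → ℝ)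
    (hu : ContDiffOn ℝ 3 u I) (hv : ContDiffOn ℝ 3 v I)
    (huode : ∀ t ∈ I, deriv (deriv u) t + ω ^ 2 * q t * u t = 0)
    (hvode : ∀ t ∈ I, deriv (deriv v) t + ω ^ 2 * q t * v t = 0)
    (hw : ∀ t ∈ I, u t * deriv v t - v t * deriv u t = 1)
    (hpos : ∀ t ∈ I, 0 < (u t) ^ 2 + (v t) ^ 2)
    (ap : ℝ → ℝ) (hap : ap = fun t => 1 / ((u t) ^ 2 + (v t) ^ 2)) :
    ∀ t ∈ I,
      (ap t) ^ 2 - ω ^ 2 * q t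
        - (3 / 4) * (deriv ap t / ap t) ^ 2
        + (1 / 2) * (deriv (deriv ap) t / ap t) = 0 :=
  kummer_from_solutions_general I hI q ω u v hu hv huode hvode hw hpos ap hap
end

section
/- The Liouville-Green logarithmic derivative r_LG(t) = iω√(q(t)) − (1/4) q'(t)/q(t) satisfies |r_LG' + r_LG² + ω²q| ≤ (5/16) q_min^{−2} + (1/4) q_min^{−1} pointwise, where the bound is independent of ω, provided q ≥ q_min > 0 and |q|, |q'|, |q''| ≤ 1. -/
open Set Complex

/-!
Differentiating `r = iω√q − q'/(4q)` gives
`r' = iω q'/(2√q) − q''/(4q) + q'²/(4q²)`, while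
`r² = −ω²q − iω q'/(2√q) + q'²/(16q²)`. The terms in `ω` cancel in `r' + r² + ω²q`,
leaving the real quantity `−q''/(4q) + (5/16) q'²/q²`, which `q ≥ q_min` and `|q'|, |q''| ≤ 1`
bound independently of `ω`.
-/

theorem hasDerivWithinAt_liouvilleGreen {f f' : ℝ → ℝ} {f'' ω t : ℝ} {s : Set ℝ}
    (hf : HasDerivWithinAt f (f' t) s t)
    (hf' : HasDerivWithinAt f' f'' s t) (hpos : 0 < f t) :
    HasDerivWithinAt (fun y => I * ω * (√(f y) : ℂ) - (f' y : ℂ) / (4 * (f y : ℂ)))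
      (I * ω * f' t / (2 * √(f t)) - f'' / (4 * f t) + f' t ^ 2 / (4 * f t ^ 2)) s t := by
  have hsqrt : HasDerivWithinAt (fun y => √(f y)) (f' t / (2 * √(f t))) s t := hf.sqrt hpos.ne'
  have hf0 : (f t : ℂ) ≠ 0 := by exact_mod_cast hpos.ne'
  refine ((hsqrt.ofReal_comp.const_mul (I * ω)).sub (hf'.ofReal_comp.div
    (hf.ofReal_comp.const_mul 4) (mul_ne_zero (by norm_num) hf0))).congr_deriv ?_
  have hsqrt0 : ((√(f t) : ℝ) : ℂ) ≠ 0 := by exact_mod_cast (Real.sqrt_pos.mpr hpos).ne'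
  push_cast
  field_simp
  ring

theorem liouvilleGreen_residual_eq (ω q q₁ q₂ : ℝ) (hq : 0 < q) :
    (I * ω * q₁ / (2 * √q) - q₂ / (4 * q) + q₁ ^ 2 / (4 * q ^ 2) : ℂ)
      + (I * ω * √q - q₁ / (4 * q)) ^ 2 + ω ^ 2 * q
      = ((-q₂ / (4 * q) + 5 / 16 * q₁ ^ 2 / q ^ 2 : ℝ) : ℂ) := by
  have hsqrt : ((√q : ℝ) : ℂ) ^ 2 = q := by exact_mod_cast Real.sq_sqrt hq.le
  have hsqrt0 : ((√q : ℝ) : ℂ) ≠ 0 := by exact_mod_cast (Real.sqrt_pos.mpr hq).ne'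
  push_cast
  rw [← hsqrt]
  field_simp
  ring_nf
  rw [I_sq]
  ring

theorem abs_liouvilleGreen_residual_le {qmin q q₁ q₂ : ℝ} (hqmin : 0 < qmin) (hq : qmin ≤ q)
    (h₁ : |q₁| ≤ 1) (h₂ : |q₂| ≤ 1) :
    |-q₂ / (4 * q) + 5 / 16 * q₁ ^ 2 / q ^ 2| ≤ 5 / 16 * qmin⁻¹ ^ 2 + 1 / 4 * qmin⁻¹ := by
  have hinv : |q⁻¹| ≤ qmin⁻¹ := by
    rw [abs_of_pos (inv_pos.mpr (hqmin.trans_le hq))]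
    exact inv_anti₀ hqmin hq
  calc |-q₂ / (4 * q) + 5 / 16 * q₁ ^ 2 / q ^ 2|
      = |5 / 16 * (q₁ ^ 2 * q⁻¹ ^ 2) + 1 / 4 * (-q₂ * q⁻¹)| := by ring_nf
    _ ≤ 5 / 16 * (|q₁| ^ 2 * |q⁻¹| ^ 2) + 1 / 4 * (|q₂| * |q⁻¹|) := by
      refine (abs_add_le _ _).trans (add_le_add ?_ ?_) <;>
        simp only [abs_mul, abs_pow, abs_neg, abs_of_pos (by norm_num : (0 : ℝ) < 5 / 16),
          abs_of_pos (by norm_num : (0 : ℝ) < 1 / 4), le_refl]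
    _ ≤ 5 / 16 * (1 ^ 2 * qmin⁻¹ ^ 2) + 1 / 4 * (1 * qmin⁻¹) := by gcongr
    _ = 5 / 16 * qmin⁻¹ ^ 2 + 1 / 4 * qmin⁻¹ := by ring

theorem liouville_green_residual_bound_general
    (a b : ℝ) (hab : a < b)
    (q : ℝ → ℝ) (hq : ContDiffOn ℝ 2 q (Icc a b))
    (qmin : ℝ) (hqmin : 0 < qmin)
    (hlow : ∀ t ∈ Icc a b, qmin ≤ q t)
    (hb1 : ∀ t ∈ Icc a b, |derivWithin q (Icc a b) t| ≤ 1)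
    (hb2 : ∀ t ∈ Icc a b, |derivWithin (derivWithin q (Icc a b)) (Icc a b) t| ≤ 1)
    (ω : ℝ)
    (rLG : ℝ → ℂ)
    (hrLG : rLG = fun t => Complex.I * Complex.ofReal ω
        * Complex.ofReal (Real.sqrt (q t))
        - Complex.ofReal (derivWithin q (Icc a b) t) / (4 * Complex.ofReal (q t))) :
    ∀ t ∈ Icc a b,
      ‖derivWithin rLG (Icc a b) t + (rLG t) ^ 2
          + (ω : ℂ) ^ 2 * (q t : ℂ)‖
        ≤ (5 / 16) * qmin⁻¹ ^ 2 + (1 / 4) * qmin⁻¹ := by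
  intro t ht
  have hU : UniqueDiffOn ℝ (Icc a b) := uniqueDiffOn_Icc hab
  have hpos : 0 < q t := hqmin.trans_le (hlow t ht)
  have hq' : HasDerivWithinAt q (derivWithin q (Icc a b) t) (Icc a b) t :=
    (hq.differentiableOn two_ne_zero t ht).hasDerivWithinAt
  have hq'' :=
    ((hq.derivWithin hU (by norm_num)).differentiableOn one_ne_zero t ht).hasDerivWithinAt
  subst hrLG
  rw [(hasDerivWithinAt_liouvilleGreen hq' hq'' hpos).derivWithin (hU t ht),
    liouvilleGreen_residual_eq _ _ _ _ hpos, norm_real, Real.norm_eq_abs]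
  exact abs_liouvilleGreen_residual_le hqmin (hlow t ht) (hb1 t ht) (hb2 t ht)

/-- The Liouville–Green logarithmic derivative
`r_LG = iω√q − q'/(4q)` satisfies
`|r_LG' + r_LG² + ω² q| ≤ (5/16) q_min⁻² + (1/4) q_min⁻¹` on `[a,b]`,
a bound independent of `ω`. -/
theorem liouville_green_residual_bound
    (a b : ℝ) (hab : a < b)
    (q : ℝ → ℝ) (hq : ContDiffOn ℝ 2 q (Icc a b))
    (qmin : ℝ) (hqmin : 0 < qmin)
    (hlow : ∀ t ∈ Icc a b, qmin ≤ q t)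
    (hb0 : ∀ t ∈ Icc a b, |q t| ≤ 1)
    (hb1 : ∀ t ∈ Icc a b, |derivWithin q (Icc a b) t| ≤ 1)
    (hb2 : ∀ t ∈ Icc a b, |derivWithin (derivWithin q (Icc a b)) (Icc a b) t| ≤ 1)
    (ω : ℝ)
    (rLG : ℝ → ℂ)
    (hrLG : rLG = fun t => Complex.I * Complex.ofReal ω
        * Complex.ofReal (Real.sqrt (q t))
        - Complex.ofReal (derivWithin q (Icc a b) t) / (4 * Complex.ofReal (q t))) :
    ∀ t ∈ Icc a b,
      ‖derivWithin rLG (Icc a b) t + (rLG t) ^ 2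
          + (ω : ℂ) ^ 2 * (q t : ℂ)‖
        ≤ (5 / 16) * qmin⁻¹ ^ 2 + (1 / 4) * qmin⁻¹ :=
  liouville_green_residual_bound_general a b hab q hq qmin hqmin hlow hb1 hb2 ω rLG hrLG
end

section
/- Let S[δ](t) = −exp(−H(t)) ∫_a^t exp(H(s)) ((δ(s))² + G(s)) ds, where |exp(±H(t))| ≤ B on [a,b] and ‖−exp(−H(·)) ∫_a^· exp(H(s)) G(s) ds‖_∞ ≤ C/ω^M with C ≥ B²(b−a). If ω^M ≥ 8C², then S maps the closed ball of radius 2C/ω^M in L∞([a,b];ℂ) (centered at 0) into itself and is a contraction on it with contraction constant 4C²/ω^M ≤ 1/2; hence S has a unique fixed point δ in this ball. -/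
open Set Metric Function intervalIntegral MeasureTheory

/-!
Write `S δ = -V (δ² + G)`, where `V φ t = exp (-H t) ∫_a^t exp (H s) φ s ds` is the
variation-of-constants operator; it satisfies `‖V φ‖ ≤ B² (b - a) ‖φ‖ ≤ C ‖φ‖`. On the ball of
radius `r = 2C/ω^M` this gives `‖S δ‖ ≤ C r² + C/ω^M ≤ r`, and, since
`δ₁² - δ₂² = (δ₁ + δ₂)(δ₁ - δ₂)`, `‖S δ₁ - S δ₂‖ ≤ 2 C r ‖δ₁ - δ₂‖ = (4C²/ω^M) ‖δ₁ - δ₂‖`.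
The fixed point comes from Banach's theorem in the complete space `C([a, b], ℂ)`; functions on `ℝ`
are restricted to `[a, b]`, and continuous functions on `[a, b]` are extended by zero.
-/

theorem exists_unique_isFixedPt_of_lipschitzOnWith {X : Type*} [MetricSpace X] [CompleteSpace X]
    {F : X → X} {s : Set X} {K : NNReal} (hs : IsClosed s) (hne : s.Nonempty)
    (hFs : MapsTo F s s) (hF : LipschitzOnWith K F s) (hK : K < 1) :
    ∃! x, x ∈ s ∧ IsFixedPt F x := by
  have : CompleteSpace s := hs.completeSpace_coe
  have : Nonempty s := hne.to_subtype
  have hc : ContractingWith K (hFs.restrict F s s) := ⟨hK, fun x y => hF x.2 y.2⟩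
  refine ⟨hc.fixedPoint, ⟨Subtype.mem _, congrArg Subtype.val hc.fixedPoint_isFixedPt⟩, ?_⟩
  rintro y ⟨hy, hFy⟩
  exact congrArg Subtype.val (hc.fixedPoint_unique (x := ⟨y, hy⟩) (Subtype.ext hFy))

theorem domRestrict_extend_val {α β : Type*} {s : Set α} (f : s → β) (g : α → β) :
    s.domRestrict (extend Subtype.val f g) = f :=
  funext fun x => extend_val_apply x.2

section ContinuousOnCompact

variable {α E : Type*} [TopologicalSpace α] [NormedAddCommGroup E] {s : Set α}

theorem continuousOn_extend_val (f : C(s, E)) : ContinuousOn (extend Subtype.val f 0) s :=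
  continuousOn_iff_continuous_domRestrict.2 (by rw [domRestrict_extend_val]; exact f.continuous)

theorem ContinuousMap.mem_closedBall_zero_iff_extend_val [CompactSpace s] {r : ℝ} (hr : 0 ≤ r)
    (f : C(s, E)) : f ∈ closedBall 0 r ↔ ∀ t ∈ s, ‖extend Subtype.val f 0 t‖ ≤ r := by
  rw [mem_closedBall_zero_iff, ContinuousMap.norm_le f hr, Subtype.forall]
  exact forall₂_congr fun t ht => by rw [extend_val_apply ht]

noncomputable def ContinuousMap.ofOperatorOn (T : (α → E) → α → E)
    (hT_cont : ∀ δ, ContinuousOn δ s → ContinuousOn (T δ) s) (f : C(s, E)) : C(s, E) :=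
  ⟨s.domRestrict (T (extend Subtype.val f 0)), (hT_cont _ (continuousOn_extend_val f)).domRestrict⟩

variable [CompactSpace s] {T : (α → E) → α → E}
  {hT_cont : ∀ δ, ContinuousOn δ s → ContinuousOn (T δ) s} {r k : ℝ}

theorem ContinuousMap.mapsTo_ofOperatorOn_closedBall (hr : 0 ≤ r)
    (hT_maps : ∀ δ, ContinuousOn δ s → (∀ t ∈ s, ‖δ t‖ ≤ r) → ∀ t ∈ s, ‖T δ t‖ ≤ r) :
    MapsTo (ofOperatorOn T hT_cont) (closedBall 0 r) (closedBall 0 r) := by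
  intro f hf
  rw [mem_closedBall_zero_iff_extend_val hr] at hf ⊢
  intro t ht
  rw [extend_val_apply ht]
  exact hT_maps _ (continuousOn_extend_val f) hf t ht

theorem ContinuousMap.lipschitzOnWith_ofOperatorOn (hr : 0 ≤ r)
    (hT_lip : ∀ δ₁ δ₂, ContinuousOn δ₁ s → ContinuousOn δ₂ s →
      (∀ t ∈ s, ‖δ₁ t‖ ≤ r) → (∀ t ∈ s, ‖δ₂ t‖ ≤ r) →
      ∀ K, (∀ t ∈ s, ‖δ₁ t - δ₂ t‖ ≤ K) → ∀ t ∈ s, ‖T δ₁ t - T δ₂ t‖ ≤ k * K) :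
    LipschitzOnWith k.toNNReal (ofOperatorOn T hT_cont) (closedBall 0 r) := by
  refine LipschitzOnWith.of_dist_le_mul fun f hf g hg => ?_
  rw [ContinuousMap.dist_le (by positivity)]
  intro x
  have hfg : ∀ t ∈ s, ‖extend Subtype.val f 0 t - extend Subtype.val g 0 t‖ ≤ dist f g :=
    fun t ht => by
      rw [extend_val_apply ht, extend_val_apply ht, ← dist_eq_norm]
      exact dist_apply_le_dist _
  calc dist (ofOperatorOn T hT_cont f x) (ofOperatorOn T hT_cont g x) ≤ k * dist f g := by
        rw [dist_eq_norm]
        exact hT_lip _ _ (continuousOn_extend_val f) (continuousOn_extend_val g)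
          ((mem_closedBall_zero_iff_extend_val hr f).1 hf)
          ((mem_closedBall_zero_iff_extend_val hr g).1 hg) _ hfg x x.2
    _ ≤ k.toNNReal * dist f g := by gcongr; exact Real.le_coe_toNNReal k

end ContinuousOnCompact

theorem exists_unique_fixedPoint_continuousOn {α E : Type*} [TopologicalSpace α]
    [NormedAddCommGroup E] [CompleteSpace E] {s : Set α} (hs : IsCompact s)
    {T : (α → E) → α → E} {r k : ℝ} (hr : 0 ≤ r) (hk : k < 1)
    (hT_cont : ∀ δ, ContinuousOn δ s → ContinuousOn (T δ) s)
    (hT_maps : ∀ δ, ContinuousOn δ s → (∀ t ∈ s, ‖δ t‖ ≤ r) → ∀ t ∈ s, ‖T δ t‖ ≤ r)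
    (hT_lip : ∀ δ₁ δ₂, ContinuousOn δ₁ s → ContinuousOn δ₂ s →
      (∀ t ∈ s, ‖δ₁ t‖ ≤ r) → (∀ t ∈ s, ‖δ₂ t‖ ≤ r) →
      ∀ K, (∀ t ∈ s, ‖δ₁ t - δ₂ t‖ ≤ K) → ∀ t ∈ s, ‖T δ₁ t - T δ₂ t‖ ≤ k * K) :
    ∃ δ, ContinuousOn δ s ∧ (∀ t ∈ s, ‖δ t‖ ≤ r) ∧ (∀ t ∈ s, δ t = T δ t) ∧
      ∀ δ', ContinuousOn δ' s → (∀ t ∈ s, ‖δ' t‖ ≤ r) → (∀ t ∈ s, δ' t = T δ' t) →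
        ∀ t ∈ s, δ' t = δ t := by
  have : CompactSpace s := isCompact_iff_compactSpace.1 hs
  obtain ⟨g, ⟨hg, hFg⟩, hg_unique⟩ := exists_unique_isFixedPt_of_lipschitzOnWith
    isClosed_closedBall (nonempty_closedBall.2 hr)
    (ContinuousMap.mapsTo_ofOperatorOn_closedBall hr hT_maps)
    (ContinuousMap.lipschitzOnWith_ofOperatorOn (hT_cont := hT_cont) hr hT_lip)
    (Real.toNNReal_lt_one.2 hk)
  refine ⟨extend Subtype.val g 0, continuousOn_extend_val g,
    (ContinuousMap.mem_closedBall_zero_iff_extend_val hr g).1 hg, fun t ht => ?_, ?_⟩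
  · rw [extend_val_apply ht]
    exact (DFunLike.congr_fun hFg ⟨t, ht⟩).symm
  intro δ' hδ' hδ'r hδ'T t ht
  let f : C(s, E) := ⟨s.domRestrict δ', hδ'.domRestrict⟩
  have hext : ∀ t ∈ s, extend Subtype.val f 0 t = δ' t := fun t ht => extend_val_apply ht
  have hf : ∀ t ∈ s, ‖extend Subtype.val f 0 t‖ ≤ r := fun t ht => by
    rw [hext t ht]; exact hδ'r t ht
  have hFf : ContinuousMap.ofOperatorOn T hT_cont f = f := by
    ext ⟨t, ht⟩
    -- `T` only sees values on `s`: the Lipschitz bound with `K = 0`.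
    have h := hT_lip _ _ (continuousOn_extend_val f) hδ' hf hδ'r 0
      (fun t ht => by rw [hext t ht, sub_self, norm_zero]) t ht
    rw [mul_zero, norm_le_zero_iff, sub_eq_zero] at h
    exact h.trans (hδ'T t ht).symm
  calc δ' t = f ⟨t, ht⟩ := rfl
    _ = g ⟨t, ht⟩ := by
      rw [hg_unique f ⟨(ContinuousMap.mem_closedBall_zero_iff_extend_val hr f).2 hf, hFf⟩]
    _ = extend Subtype.val g 0 t := (extend_val_apply ht).symm

/-- The solution of `y' + H' y = φ`, `y a = 0`, by variation of constants. -/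
noncomputable def twistedPrimitive (H : ℝ → ℂ) (a : ℝ) (φ : ℝ → ℂ) (t : ℝ) : ℂ :=
  Complex.exp (-H t) * ∫ s in a..t, Complex.exp (H s) * φ s

section TwistedPrimitive

variable {H φ ψ : ℝ → ℂ} {a b t : ℝ}

theorem norm_twistedPrimitive_le {B K : ℝ} (hB₁ : ∀ s ∈ Icc a b, ‖Complex.exp (H s)‖ ≤ B)
    (hB₂ : ∀ s ∈ Icc a b, ‖Complex.exp (-H s)‖ ≤ B) (hφ : ∀ s ∈ Icc a b, ‖φ s‖ ≤ K)
    (ht : t ∈ Icc a b) : ‖twistedPrimitive H a φ t‖ ≤ B ^ 2 * (b - a) * K := by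
  have hB : 0 ≤ B := (norm_nonneg _).trans (hB₂ t ht)
  have hK : 0 ≤ K := (norm_nonneg _).trans (hφ t ht)
  have hint : ‖∫ s in a..t, Complex.exp (H s) * φ s‖ ≤ B * K * |t - a| := by
    refine norm_integral_le_of_norm_le_const fun s hs => ?_
    rw [uIoc_of_le ht.1] at hs
    have hs' : s ∈ Icc a b := ⟨hs.1.le, hs.2.trans ht.2⟩
    rw [norm_mul]
    exact mul_le_mul (hB₁ s hs') (hφ s hs') (norm_nonneg _) hB
  have hta : |t - a| ≤ b - a := by rw [abs_of_nonneg (sub_nonneg.2 ht.1)]; linarith [ht.2]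
  calc ‖twistedPrimitive H a φ t‖ ≤ B * (B * K * (b - a)) := by
        rw [twistedPrimitive, norm_mul]
        gcongr
        · exact hB₂ t ht
        · exact hint.trans (by gcongr)
    _ = B ^ 2 * (b - a) * K := by ring

theorem intervalIntegrable_exp_mul (hH : ContinuousOn H (Icc a b))
    (hφ : ContinuousOn φ (Icc a b)) (ht : t ∈ Icc a b) :
    IntervalIntegrable (fun s => Complex.exp (H s) * φ s) volume a t := by
  have hsub : uIcc a t ⊆ Icc a b := by
    rw [uIcc_of_le ht.1]; exact Icc_subset_Icc le_rfl ht.2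
  exact ((hH.mono hsub).cexp.mul (hφ.mono hsub)).intervalIntegrable

theorem twistedPrimitive_add (hH : ContinuousOn H (Icc a b)) (hφ : ContinuousOn φ (Icc a b))
    (hψ : ContinuousOn ψ (Icc a b)) (ht : t ∈ Icc a b) :
    twistedPrimitive H a (fun s => φ s + ψ s) t =
      twistedPrimitive H a φ t + twistedPrimitive H a ψ t := by
  simp only [twistedPrimitive, mul_add,
    integral_add (intervalIntegrable_exp_mul hH hφ ht) (intervalIntegrable_exp_mul hH hψ ht)]

theorem twistedPrimitive_sub (hH : ContinuousOn H (Icc a b)) (hφ : ContinuousOn φ (Icc a b))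
    (hψ : ContinuousOn ψ (Icc a b)) (ht : t ∈ Icc a b) :
    twistedPrimitive H a (fun s => φ s - ψ s) t =
      twistedPrimitive H a φ t - twistedPrimitive H a ψ t := by
  simp only [twistedPrimitive, mul_sub,
    integral_sub (intervalIntegrable_exp_mul hH hφ ht) (intervalIntegrable_exp_mul hH hψ ht)]

theorem continuousOn_twistedPrimitive (hH : ContinuousOn H (Icc a b))
    (hφ : ContinuousOn φ (Icc a b)) : ContinuousOn (twistedPrimitive H a φ) (Icc a b) := by
  rcases lt_or_ge b a with hba | hab
  · simp [Icc_eq_empty_of_lt hba]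
  refine hH.neg.cexp.mul ?_
  have hint : IntegrableOn (fun s => Complex.exp (H s) * φ s) (uIcc a b) := by
    rw [uIcc_of_le hab]; exact (hH.cexp.mul hφ).integrableOn_compact isCompact_Icc
  simpa only [uIcc_of_le hab] using continuousOn_primitive_interval hint

end TwistedPrimitive

section Riccati

/-- Fixed points of `riccatiMap H G a` solve the Riccati equation `δ' + H' δ + δ² + G = 0`,
`δ a = 0`. -/
noncomputable def riccatiMap (H G : ℝ → ℂ) (a : ℝ) (δ : ℝ → ℂ) (t : ℝ) : ℂ :=
  -Complex.exp (-H t) * ∫ s in a..t, Complex.exp (H s) * (δ s ^ 2 + G s)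

variable {H G : ℝ → ℂ} {a b B C r : ℝ}

theorem riccatiMap_eq_neg_twistedPrimitive (δ : ℝ → ℂ) (t : ℝ) :
    riccatiMap H G a δ t = -twistedPrimitive H a (fun s => δ s ^ 2 + G s) t :=
  neg_mul _ _

theorem norm_riccatiMap_le (hH : ContinuousOn H (Icc a b)) (hG : ContinuousOn G (Icc a b))
    (hB₁ : ∀ s ∈ Icc a b, ‖Complex.exp (H s)‖ ≤ B)
    (hB₂ : ∀ s ∈ Icc a b, ‖Complex.exp (-H s)‖ ≤ B) (hCB : B ^ 2 * (b - a) ≤ C) {ε : ℝ}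
    (hGε : ∀ t ∈ Icc a b, ‖twistedPrimitive H a G t‖ ≤ ε) (hr : C * r ^ 2 + ε ≤ r)
    (δ : ℝ → ℂ) (hδ : ContinuousOn δ (Icc a b)) (hδr : ∀ t ∈ Icc a b, ‖δ t‖ ≤ r)
    (t : ℝ) (ht : t ∈ Icc a b) : ‖riccatiMap H G a δ t‖ ≤ r := by
  have hδ_sq : ∀ s ∈ Icc a b, ‖δ s ^ 2‖ ≤ r ^ 2 := fun s hs => by
    rw [norm_pow]; gcongr; exact hδr s hs
  calc ‖riccatiMap H G a δ t‖
      = ‖twistedPrimitive H a (fun s => δ s ^ 2) t + twistedPrimitive H a G t‖ := by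
        rw [riccatiMap_eq_neg_twistedPrimitive, norm_neg,
          twistedPrimitive_add (φ := fun s => δ s ^ 2) hH (hδ.pow 2) hG ht]
    _ ≤ B ^ 2 * (b - a) * r ^ 2 + ε :=
        norm_add_le_of_le (norm_twistedPrimitive_le hB₁ hB₂ hδ_sq ht) (hGε t ht)
    _ ≤ C * r ^ 2 + ε := by gcongr
    _ ≤ r := hr

theorem norm_riccatiMap_sub_le (hH : ContinuousOn H (Icc a b)) (hG : ContinuousOn G (Icc a b))
    (hB₁ : ∀ s ∈ Icc a b, ‖Complex.exp (H s)‖ ≤ B)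
    (hB₂ : ∀ s ∈ Icc a b, ‖Complex.exp (-H s)‖ ≤ B) (hCB : B ^ 2 * (b - a) ≤ C)
    (δ₁ δ₂ : ℝ → ℂ) (hδ₁ : ContinuousOn δ₁ (Icc a b)) (hδ₂ : ContinuousOn δ₂ (Icc a b))
    (hδ₁r : ∀ t ∈ Icc a b, ‖δ₁ t‖ ≤ r) (hδ₂r : ∀ t ∈ Icc a b, ‖δ₂ t‖ ≤ r)
    (K : ℝ) (hK : ∀ t ∈ Icc a b, ‖δ₁ t - δ₂ t‖ ≤ K) (t : ℝ) (ht : t ∈ Icc a b) :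
    ‖riccatiMap H G a δ₁ t - riccatiMap H G a δ₂ t‖ ≤ 2 * C * r * K := by
  have hdiff : ∀ s ∈ Icc a b, ‖(δ₂ s ^ 2 + G s) - (δ₁ s ^ 2 + G s)‖ ≤ 2 * r * K := by
    intro s hs
    rw [add_sub_add_right_eq_sub, sq_sub_sq, norm_mul, norm_sub_rev, two_mul]
    have hsum : ‖δ₂ s + δ₁ s‖ ≤ r + r := norm_add_le_of_le (hδ₂r s hs) (hδ₁r s hs)
    exact mul_le_mul hsum (hK s hs) (norm_nonneg _) ((norm_nonneg _).trans hsum)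
  have hrK : 0 ≤ 2 * r * K := (norm_nonneg _).trans (hdiff t ht)
  calc ‖riccatiMap H G a δ₁ t - riccatiMap H G a δ₂ t‖
      = ‖twistedPrimitive H a (fun s => (δ₂ s ^ 2 + G s) - (δ₁ s ^ 2 + G s)) t‖ := by
        rw [riccatiMap_eq_neg_twistedPrimitive, riccatiMap_eq_neg_twistedPrimitive, neg_sub_neg,
          twistedPrimitive_sub (φ := fun s => δ₂ s ^ 2 + G s) (ψ := fun s => δ₁ s ^ 2 + G s) hH
          ((hδ₂.pow 2).add hG) ((hδ₁.pow 2).add hG) ht]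
    _ ≤ B ^ 2 * (b - a) * (2 * r * K) := norm_twistedPrimitive_le hB₁ hB₂ hdiff ht
    _ ≤ C * (2 * r * K) := by gcongr
    _ = 2 * C * r * K := by ring

theorem continuousOn_riccatiMap (hH : ContinuousOn H (Icc a b)) (hG : ContinuousOn G (Icc a b))
    {δ : ℝ → ℂ} (hδ : ContinuousOn δ (Icc a b)) :
    ContinuousOn (riccatiMap H G a δ) (Icc a b) := by
  simp only [funext (riccatiMap_eq_neg_twistedPrimitive (H := H) (G := G) (a := a) δ)]
  exact (continuousOn_twistedPrimitive hH ((hδ.pow 2).add hG)).neg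

end Riccati

theorem riccati_contraction_general
    (a b : ℝ)
    (H : ℝ → ℂ) (hH : ContinuousOn H (Icc a b))
    (G : ℝ → ℂ) (hG : ContinuousOn G (Icc a b))
    (B C ω : ℝ) (M : ℕ) (hC : 0 < C) (hω : 0 < ω)
    (hB1 : ∀ t ∈ Icc a b, ‖Complex.exp (H t)‖ ≤ B)
    (hB2 : ∀ t ∈ Icc a b, ‖Complex.exp (-H t)‖ ≤ B)
    (hCB : B ^ 2 * (b - a) ≤ C)
    (h0 : ∀ t ∈ Icc a b,
      ‖Complex.exp (-H t) * ∫ s in a..t, Complex.exp (H s) * G s‖ ≤ C / ω ^ M)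
    (hbig : 8 * C ^ 2 ≤ ω ^ M)
    (S : (ℝ → ℂ) → (ℝ → ℂ))
    (hS : S = fun δ t => -Complex.exp (-H t)
      * ∫ s in a..t, Complex.exp (H s) * ((δ s) ^ 2 + G s)) :
    4 * C ^ 2 / ω ^ M ≤ 1 / 2 ∧
    (∀ δ : ℝ → ℂ, ContinuousOn δ (Icc a b) →
      (∀ t ∈ Icc a b, ‖δ t‖ ≤ 2 * C / ω ^ M) →
      ∀ t ∈ Icc a b, ‖S δ t‖ ≤ 2 * C / ω ^ M) ∧
    (∀ δ₁ δ₂ : ℝ → ℂ, ContinuousOn δ₁ (Icc a b) → ContinuousOn δ₂ (Icc a b) →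
      (∀ t ∈ Icc a b, ‖δ₁ t‖ ≤ 2 * C / ω ^ M) →
      (∀ t ∈ Icc a b, ‖δ₂ t‖ ≤ 2 * C / ω ^ M) →
      ∀ K : ℝ, (∀ s ∈ Icc a b, ‖δ₁ s - δ₂ s‖ ≤ K) →
        ∀ t ∈ Icc a b, ‖S δ₁ t - S δ₂ t‖ ≤ (4 * C ^ 2 / ω ^ M) * K) ∧
    (∃ δ : ℝ → ℂ, ContinuousOn δ (Icc a b) ∧
      (∀ t ∈ Icc a b, ‖δ t‖ ≤ 2 * C / ω ^ M) ∧
      (∀ t ∈ Icc a b, δ t = S δ t) ∧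
      (∀ δ' : ℝ → ℂ, ContinuousOn δ' (Icc a b) →
        (∀ t ∈ Icc a b, ‖δ' t‖ ≤ 2 * C / ω ^ M) →
        (∀ t ∈ Icc a b, δ' t = S δ' t) →
        ∀ t ∈ Icc a b, δ' t = δ t)) := by
  subst hS
  have hωM : 0 < ω ^ M := pow_pos hω M
  have hk : 4 * C ^ 2 / ω ^ M ≤ 1 / 2 := by rw [div_le_iff₀ hωM]; linarith
  have hr : C * (2 * C / ω ^ M) ^ 2 + C / ω ^ M ≤ 2 * C / ω ^ M := by
    have hε : 0 ≤ C / ω ^ M := by positivity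
    calc C * (2 * C / ω ^ M) ^ 2 + C / ω ^ M
        = 4 * C ^ 2 / ω ^ M * (C / ω ^ M) + C / ω ^ M := by ring
      _ ≤ 1 / 2 * (C / ω ^ M) + C / ω ^ M := by gcongr
      _ ≤ 2 * C / ω ^ M := by rw [mul_div_assoc]; linarith
  have hmaps := norm_riccatiMap_le hH hG hB1 hB2 hCB h0 hr
  have hlip := norm_riccatiMap_sub_le hH hG hB1 hB2 hCB (r := 2 * C / ω ^ M)
  rw [show 2 * C * (2 * C / ω ^ M) = 4 * C ^ 2 / ω ^ M by ring] at hlip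
  exact ⟨hk, hmaps, hlip, exists_unique_fixedPoint_continuousOn isCompact_Icc (by positivity)
    (by linarith) (fun δ hδ => continuousOn_riccatiMap hH hG hδ) hmaps hlip⟩

/-- The operator `S[δ](t) = −exp(−H(t)) ∫_a^t exp(H(s)) (δ(s)² + G(s)) ds`
maps the closed ball of radius `2C/ω^M` of continuous functions on `[a,b]`
into itself, is a contraction there with constant `4C²/ω^M ≤ 1/2`, and hence
has a unique fixed point in this ball. -/
theorem riccati_contraction
    (a b : ℝ) (hab : a ≤ b)
    (H : ℝ → ℂ) (hH : ContinuousOn H (Icc a b))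
    (G : ℝ → ℂ) (hG : ContinuousOn G (Icc a b))
    (B C ω : ℝ) (M : ℕ) (hM : 0 < M) (hC : 0 < C) (hω : 0 < ω)
    (hB1 : ∀ t ∈ Icc a b, ‖Complex.exp (H t)‖ ≤ B)
    (hB2 : ∀ t ∈ Icc a b, ‖Complex.exp (-H t)‖ ≤ B)
    (hCB : B ^ 2 * (b - a) ≤ C)
    (h0 : ∀ t ∈ Icc a b,
      ‖Complex.exp (-H t) * ∫ s in a..t, Complex.exp (H s) * G s‖ ≤ C / ω ^ M)
    (hbig : 8 * C ^ 2 ≤ ω ^ M)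
    (S : (ℝ → ℂ) → (ℝ → ℂ))
    (hS : S = fun δ t => -Complex.exp (-H t)
      * ∫ s in a..t, Complex.exp (H s) * ((δ s) ^ 2 + G s)) :
    4 * C ^ 2 / ω ^ M ≤ 1 / 2 ∧
    (∀ δ : ℝ → ℂ, ContinuousOn δ (Icc a b) →
      (∀ t ∈ Icc a b, ‖δ t‖ ≤ 2 * C / ω ^ M) →
      ∀ t ∈ Icc a b, ‖S δ t‖ ≤ 2 * C / ω ^ M) ∧
    (∀ δ₁ δ₂ : ℝ → ℂ, ContinuousOn δ₁ (Icc a b) → ContinuousOn δ₂ (Icc a b) →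
      (∀ t ∈ Icc a b, ‖δ₁ t‖ ≤ 2 * C / ω ^ M) →
      (∀ t ∈ Icc a b, ‖δ₂ t‖ ≤ 2 * C / ω ^ M) →
      ∀ K : ℝ, (∀ s ∈ Icc a b, ‖δ₁ s - δ₂ s‖ ≤ K) →
        ∀ t ∈ Icc a b, ‖S δ₁ t - S δ₂ t‖ ≤ (4 * C ^ 2 / ω ^ M) * K) ∧
    (∃ δ : ℝ → ℂ, ContinuousOn δ (Icc a b) ∧
      (∀ t ∈ Icc a b, ‖δ t‖ ≤ 2 * C / ω ^ M) ∧
      (∀ t ∈ Icc a b, δ t = S δ t) ∧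
      (∀ δ' : ℝ → ℂ, ContinuousOn δ' (Icc a b) →
        (∀ t ∈ Icc a b, ‖δ' t‖ ≤ 2 * C / ω ^ M) →
        (∀ t ∈ Icc a b, δ' t = S δ' t) →
        ∀ t ∈ Icc a b, δ' t = δ t)) :=
  riccati_contraction_general a b H hH G hG B C ω M hC hω hB1 hB2 hCB h0 hbig S hS
end

section
/- If δ : [a,b] → ℂ is continuous and satisfies the integral equation δ(t) = −exp(−H(t)) ∫_a^t exp(H(s)) ((δ(s))² + G(s)) ds, where H(t) = 2∫_a^t r_M(s) ds and G = r_M' + r_M² + ω²q with r_M continuously differentiable, then r = r_M + δ is differentiable and satisfies the Riccati equation r' + r² + ω²q = 0 on [a,b]. -/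
open Set

/-!
Writing `δ = -e^{-H} ∫_a^t e^{H} (δ² + G)` (Duhamel's formula), the product rule and the fundamental
theorem of calculus give `δ' = -H' δ - (δ² + G) = -2 r_M δ - δ² - r_M' - r_M² - ω² q`, and adding
`r_M'` turns this into `(r_M + δ)' = -(r_M + δ)² - ω² q`.
-/

theorem ContinuousOn.integral_hasDerivWithinAt_Icc {E : Type*} [NormedAddCommGroup E]
    [NormedSpace ℝ E] [CompleteSpace E] {a b t : ℝ} {g : ℝ → E}
    (hg : ContinuousOn g (Icc a b)) (ht : t ∈ Icc a b) :
    HasDerivWithinAt (fun u => ∫ s in a..u, g s) (g t) (Icc a b) t :=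
  haveI : Fact (t ∈ Icc a b) := ⟨ht⟩
  intervalIntegral.integral_hasDerivWithinAt_right
    ((hg.mono (uIcc_subset_Icc (left_mem_Icc.2 (ht.1.trans ht.2)) ht)).intervalIntegrable)
    (hg.stronglyMeasurableAtFilter_nhdsWithin measurableSet_Icc t) (hg t ht)

/-- A function given by Duhamel's formula solves the linear equation `φ' = -H' φ - f`. -/
theorem hasDerivWithinAt_of_duhamel {a b t : ℝ} {H f φ : ℝ → ℂ} {h : ℂ}
    (hHc : ContinuousOn H (Icc a b)) (hH : HasDerivWithinAt H h (Icc a b) t)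
    (hf : ContinuousOn f (Icc a b)) (ht : t ∈ Icc a b)
    (hφ : ∀ u ∈ Icc a b, φ u = -Complex.exp (-H u) * ∫ s in a..u, Complex.exp (H s) * f s) :
    HasDerivWithinAt φ (-(h * φ t) - f t) (Icc a b) t := by
  have hexp : HasDerivWithinAt (fun u => -Complex.exp (-H u))
      (-(Complex.exp (-H t) * -h)) (Icc a b) t := hH.neg.cexp.neg
  have hint : HasDerivWithinAt (fun u => ∫ s in a..u, Complex.exp (H s) * f s)
      (Complex.exp (H t) * f t) (Icc a b) t :=
    (hHc.cexp.mul hf).integral_hasDerivWithinAt_Icc ht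
  have hcancel : Complex.exp (-H t) * Complex.exp (H t) = 1 := by
    rw [← Complex.exp_add, neg_add_cancel, Complex.exp_zero]
  refine ((hexp.mul hint).congr hφ (hφ t ht)).congr_deriv ?_
  rw [hφ t ht]
  linear_combination -f t * hcancel

theorem riccati_solution_from_integral_equation_general
    (a b : ℝ)
    (q : ℝ → ℝ) (hq : ContinuousOn q (Icc a b)) (ω : ℝ)
    (rM : ℝ → ℂ) (hrM : ContDiff ℝ 1 rM)
    (H : ℝ → ℂ) (hH : H = fun t => 2 * ∫ s in a..t, rM s)
    (G : ℝ → ℂ)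
    (hGdef : G = fun t => deriv rM t + (rM t) ^ 2 + (ω : ℂ) ^ 2 * (q t : ℂ))
    (δ : ℝ → ℂ) (hδc : ContinuousOn δ (Icc a b))
    (hδeq : ∀ t ∈ Icc a b, δ t = -Complex.exp (-H t)
      * ∫ s in a..t, Complex.exp (H s) * ((δ s) ^ 2 + G s))
    (r : ℝ → ℂ) (hr : r = fun t => rM t + δ t) :
    ∀ t ∈ Icc a b,
      HasDerivWithinAt r (-((r t) ^ 2 + (ω : ℂ) ^ 2 * (q t : ℂ))) (Icc a b) t := by
  intro t ht
  have hHd : ∀ x, HasDerivAt H (2 * rM x) x := fun x => by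
    rw [hH]
    exact (hrM.continuous.integral_hasStrictDerivAt a x).hasDerivAt.const_mul 2
  have hGc : ContinuousOn G (Icc a b) := by
    rw [hGdef]
    exact ((hrM.continuous_deriv le_rfl).add (hrM.continuous.pow 2)).continuousOn.add
      (continuousOn_const.mul (Complex.continuous_ofReal.comp_continuousOn hq))
  have hδd := hasDerivWithinAt_of_duhamel (f := fun s => δ s ^ 2 + G s)
    (fun x _ => (hHd x).continuousAt.continuousWithinAt) (hHd t).hasDerivWithinAt
    ((hδc.pow 2).add hGc) ht hδeq
  have hrMd : HasDerivWithinAt rM (deriv rM t) (Icc a b) t :=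
    ((hrM.differentiable one_ne_zero) t).hasDerivAt.hasDerivWithinAt
  subst hr hGdef
  exact (hrMd.add hδd).congr_deriv (by beta_reduce; ring)

/-- If `δ` is continuous and satisfies the Volterra integral equation
`δ(t) = −exp(−H(t)) ∫_a^t exp(H(s)) (δ(s)² + G(s)) ds`, with
`H(t) = 2∫_a^t r_M` and `G = r_M' + r_M² + ω² q`, then `r = r_M + δ` is
differentiable and satisfies the Riccati equation `r' + r² + ω² q = 0`
on `[a,b]`. -/
theorem riccati_solution_from_integral_equation
    (a b : ℝ) (hab : a ≤ b)
    (q : ℝ → ℝ) (hq : ContinuousOn q (Icc a b)) (ω : ℝ)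
    (rM : ℝ → ℂ) (hrM : ContDiff ℝ 1 rM)
    (H : ℝ → ℂ) (hH : H = fun t => 2 * ∫ s in a..t, rM s)
    (G : ℝ → ℂ)
    (hGdef : G = fun t => deriv rM t + (rM t) ^ 2 + (ω : ℂ) ^ 2 * (q t : ℂ))
    (δ : ℝ → ℂ) (hδc : ContinuousOn δ (Icc a b))
    (hδeq : ∀ t ∈ Icc a b, δ t = -Complex.exp (-H t)
      * ∫ s in a..t, Complex.exp (H s) * ((δ s) ^ 2 + G s))
    (r : ℝ → ℂ) (hr : r = fun t => rM t + δ t) :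
    ∀ t ∈ Icc a b,
      HasDerivWithinAt r (-((r t) ^ 2 + (ω : ℂ) ^ 2 * (q t : ℂ))) (Icc a b) t :=
  riccati_solution_from_integral_equation_general a b q hq ω rM hrM H hH G hGdef δ hδc hδeq r hr
end

section
/- Suppose r : [a,b] → ℂ solves the Riccati equation r' + r² + ω²q = 0 with Im r(t) > 0 for all t. Define α'(t) = Im r(t) and m(t) = 1/α'(t). Then m satisfies Appell's equation m''' + 4ω²q m' + 2ω²q' m = 0, provided Re r(t) = −(1/2)α''(t)/α'(t) (equivalently, α'' = −2 α' Re r) and all the required derivatives exist. -/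
/-!
Write `r = u + i v`. The Riccati equation splits into `u' = v² - u² - ω² q` and `v' = -2 u v`,
so `m = 1 / v` satisfies the first-order system `m' = 2 u m`, `u' = m⁻² - u² - ω² q`.
Differentiating `m' = 2 u m` with this system gives `m'' = 2 / m + 2 u² m - 2 ω² q m`, and one
more differentiation yields Appell's equation at every interior point. Since `m` is `C³` on the
open set where `Im r ≠ 0`, the Appell expression is continuous there, so it also vanishes at the
endpoints.
-/

open Set Filter Topology

section Riccati

variable {r : ℝ → ℂ} {p t : ℝ}

theorem hasDerivAt_re_of_riccati (hr : DifferentiableAt ℝ r t)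
    (hric : deriv r t + r t ^ 2 + p = 0) :
    HasDerivAt (fun s => (r s).re) ((r t).im ^ 2 - (r t).re ^ 2 - p) t := by
  have h : HasDerivAt (fun s => (r s).re) (deriv r t).re t :=
    Complex.reCLM.hasFDerivAt.comp_hasDerivAt t hr.hasDerivAt
  rw [show deriv r t = -r t ^ 2 - p by linear_combination hric] at h
  exact h.congr_deriv (by simp [sq])

theorem hasDerivAt_im_of_riccati (hr : DifferentiableAt ℝ r t)
    (hric : deriv r t + r t ^ 2 + p = 0) :
    HasDerivAt (fun s => (r s).im) (-2 * (r t).re * (r t).im) t := by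
  have h : HasDerivAt (fun s => (r s).im) (deriv r t).im t :=
    Complex.imCLM.hasFDerivAt.comp_hasDerivAt t hr.hasDerivAt
  rw [show deriv r t = -r t ^ 2 - p by linear_combination hric] at h
  exact h.congr_deriv (by simp [sq]; ring)

theorem hasDerivAt_one_div_im_of_riccati (hr : DifferentiableAt ℝ r t)
    (hric : deriv r t + r t ^ 2 + p = 0) (him : (r t).im ≠ 0) :
    HasDerivAt (fun s => 1 / (r s).im) (2 * (r t).re * (1 / (r t).im)) t := by
  simp only [one_div]
  exact ((hasDerivAt_im_of_riccati hr hric).fun_inv him).congr_deriv (by field_simp)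

end Riccati

noncomputable def appellOperator (c : ℝ) (q m : ℝ → ℝ) (t : ℝ) : ℝ :=
  deriv (deriv (deriv m)) t + 4 * c * q t * deriv m t + 2 * c * deriv q t * m t

theorem appellOperator_eq_zero_of_hasDerivAt {c t : ℝ} {q u m : ℝ → ℝ}
    (hu : ∀ᶠ s in 𝓝 t, HasDerivAt u ((m s)⁻¹ ^ 2 - u s ^ 2 - c * q s) s)
    (hm : ∀ᶠ s in 𝓝 t, HasDerivAt m (2 * u s * m s) s)
    (hq : DifferentiableAt ℝ q t) (hmt : m t ≠ 0) :
    appellOperator c q m t = 0 := by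
  set m₂ : ℝ → ℝ := fun s => 2 * (m s)⁻¹ + 2 * u s ^ 2 * m s - 2 * c * q s * m s
  have hm₁ : deriv m =ᶠ[𝓝 t] fun s => 2 * u s * m s := hm.mono fun s hs => hs.deriv
  have hm₂ : deriv (deriv m) =ᶠ[𝓝 t] m₂ := by
    filter_upwards [hm₁.deriv, hu, hm] with s hs hus hms
    rw [hs, ((hus.const_mul 2).fun_mul hms).deriv]
    by_cases h : m s = 0
    · simp [m₂, h]
    · simp only [m₂]
      field_simp
      ring
  have hm₃ : HasDerivAt m₂ _ t :=
    (((hm.self_of_nhds.inv hmt).const_mul 2).add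
      (((hu.self_of_nhds.fun_pow 2).const_mul 2).fun_mul hm.self_of_nhds)).sub
      ((hq.hasDerivAt.const_mul (2 * c)).fun_mul hm.self_of_nhds)
  rw [appellOperator, hm₂.deriv_eq, hm₃.deriv, hm₁.self_of_nhds]
  field_simp
  ring

theorem ContDiffOn.continuousOn_appellOperator {c : ℝ} {q m : ℝ → ℝ} {U : Set ℝ}
    (hm : ContDiffOn ℝ 3 m U) (hU : IsOpen U) (hq : ContDiff ℝ 1 q) :
    ContinuousOn (appellOperator c q m) U := by
  have hm₁ : ContDiffOn ℝ 2 (deriv m) U := hm.deriv_of_isOpen hU (by norm_num)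
  have hm₂ : ContDiffOn ℝ 1 (deriv (deriv m)) U := hm₁.deriv_of_isOpen hU (by norm_num)
  have hm₃ := hm₂.continuousOn_deriv_of_isOpen hU le_rfl
  have hq₁ := hq.continuous_deriv le_rfl
  exact (hm₃.add ((continuous_const.mul hq.continuous).continuousOn.mul hm₁.continuousOn)).add
    ((continuous_const.mul hq₁).continuousOn.mul hm.continuousOn)

theorem appell_from_riccati_general
    (a b : ℝ) (hab : a < b)
    (q : ℝ → ℝ) (hq : ContDiff ℝ 1 q) (ω : ℝ)
    (r : ℝ → ℂ) (hr : ContDiff ℝ 3 r)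
    (hric : ∀ t ∈ Icc a b,
      deriv r t + (r t) ^ 2 + (ω : ℂ) ^ 2 * (q t : ℂ) = 0)
    (hIm : ∀ t ∈ Icc a b, 0 < (r t).im)
    (m : ℝ → ℝ) (hm : m = fun t => 1 / (r t).im) :
    ∀ t ∈ Icc a b,
      deriv (deriv (deriv m)) t + 4 * ω ^ 2 * q t * deriv m t
        + 2 * ω ^ 2 * deriv q t * m t = 0 := by
  subst hm
  have hrd : Differentiable ℝ r := hr.differentiable (by norm_num)
  have hric' (t : ℝ) (ht : t ∈ Icc a b) :
      deriv r t + r t ^ 2 + ((ω ^ 2 * q t : ℝ) : ℂ) = 0 := by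
    push_cast
    exact hric t ht
  have hU : IsOpen {t | (r t).im ≠ 0} :=
    isOpen_ne_fun (Complex.continuous_im.comp hr.continuous) continuous_const
  have hmU : ContDiffOn ℝ 3 (fun t => 1 / (r t).im) {t | (r t).im ≠ 0} :=
    contDiffOn_const.div (Complex.imCLM.contDiff.comp hr).contDiffOn fun _ h => h
  have hIoo : EqOn (appellOperator (ω ^ 2) q fun t => 1 / (r t).im) 0 (Ioo a b) := by
    intro t ht
    have hIcc : ∀ᶠ s in 𝓝 t, s ∈ Icc a b :=
      mem_of_superset (Ioo_mem_nhds ht.1 ht.2) Ioo_subset_Icc_self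
    refine appellOperator_eq_zero_of_hasDerivAt (u := fun s => (r s).re) ?_ ?_
      (hq.differentiable (by norm_num) t) (by simpa using (hIm t (Ioo_subset_Icc_self ht)).ne')
    · filter_upwards [hIcc] with s hs
      simpa using hasDerivAt_re_of_riccati (hrd s) (hric' s hs)
    · filter_upwards [hIcc] with s hs
      exact hasDerivAt_one_div_im_of_riccati (hrd s) (hric' s hs) (hIm s hs).ne'
  have hcont : ContinuousOn (appellOperator (ω ^ 2) q fun t => 1 / (r t).im) (Icc a b) :=
    (hmU.continuousOn_appellOperator hU hq).mono fun t ht => (hIm t ht).ne'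
  exact hIoo.of_subset_closure hcont continuousOn_const Ioo_subset_Icc_self (closure_Ioo hab.ne).ge

/-- If `r` solves the Riccati equation `r' + r² + ω² q = 0` with `Im r > 0`,
`α' := Im r`, `m := 1/α'`, and `Re r = −α''/(2α')`, then `m` satisfies
Appell's equation `m''' + 4ω² q m' + 2ω² q' m = 0`. -/
theorem appell_from_riccati
    (a b : ℝ) (hab : a < b)
    (q : ℝ → ℝ) (hq : ContDiff ℝ 1 q) (ω : ℝ)
    (r : ℝ → ℂ) (hr : ContDiff ℝ 3 r)
    (hric : ∀ t ∈ Icc a b,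
      deriv r t + (r t) ^ 2 + (ω : ℂ) ^ 2 * (q t : ℂ) = 0)
    (hIm : ∀ t ∈ Icc a b, 0 < (r t).im)
    (hRe : ∀ t ∈ Icc a b,
      (r t).re = -(deriv (fun s => (r s).im) t) / (2 * (r t).im))
    (m : ℝ → ℝ) (hm : m = fun t => 1 / (r t).im) :
    ∀ t ∈ Icc a b,
      deriv (deriv (deriv m)) t + 4 * ω ^ 2 * q t * deriv m t
        + 2 * ω ^ 2 * deriv q t * m t = 0 :=
  appell_from_riccati_general a b hab q hq ω r hr hric hIm m hm
end
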